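/- Persistence: For any σ-sentence φ, possibly containing algebraic constraints, and any σ-HT-interpretation (I^H, I^T), if (I^H, I^T, H) ⊨_σ φ then (I^H, I^T, T) ⊨_σ φ. -/

import Mathlib

/-- The two worlds of HT logic. -/
inductive W : Type | H | T
deriving DecidableEq

/-- `W.le w w'` means `w' ≥ w` in the HT order (with `T ≥ H`). -/
def W.le : W → W → Prop
  | .H, _ => True
  | .T, w' => w' = .T

/-- An HT-interpretation: a pair of sets of (variable-free) atoms with `h ⊆ t`. -/
structure HTI (A : Type*) where
  h : Set A
  t : Set A
  sub : h ⊆ t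

/-- The component of a pointed HT-interpretation at world `w`. -/
def HTI.at {A : Type*} (I : HTI A) : W → Set A
  | .H => I.h
  | .T => I.t

mutual
/-- σ-formulas (with algebraic constraints) over domain `D`, ground atoms `A`,
    and a family of semirings `Rs i` (HOAS encoding of quantifiers). -/
inductive Fml (D A : Type) (ι : Type) (Rs : ι → Type) : Type 1
  | bot
  | atom (a : A)
  | impl (φ ψ : Fml D A ι Rs)
  | or (φ ψ : Fml D A ι Rs)
  | and (φ ψ : Fml D A ι Rs)
  | ex (s : Set D) (b : D → Fml D A ι Rs)
  | all (s : Set D) (b : D → Fml D A ι Rs)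
  /-- algebraic constraint `k ~_{Rs i} α`, where `cmp = (k ~ ·)` -/
  | constr (i : ι) (cmp : Rs i → Prop) (α : WFml D A ι Rs i)

/-- Weighted σ-formulas over the semiring `Rs i`. -/
inductive WFml (D A : Type) (ι : Type) (Rs : ι → Type) : ι → Type 1
  | const {i : ι} (k : Rs i) : WFml D A ι Rs i
  | form {i : ι} (φ : Fml D A ι Rs) : WFml D A ι Rs i
  | wimpl {i : ι} (α β : WFml D A ι Rs i) : WFml D A ι Rs i
  | add {i : ι} (α β : WFml D A ι Rs i) : WFml D A ι Rs i
  | mul {i : ι} (α β : WFml D A ι Rs i) : WFml D A ι Rs i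
  | neg {i : ι} (α : WFml D A ι Rs i) : WFml D A ι Rs i
  | inv {i : ι} (α : WFml D A ι Rs i) : WFml D A ι Rs i
  | sum {i : ι} (s : Set D) (b : D → WFml D A ι Rs i) : WFml D A ι Rs i
end

variable {D A : Type} {ι : Type} {Rs : ι → Type} [∀ i, Semiring (Rs i)]

open Classical in
mutual
/-- HT satisfaction of σ-sentences (`nO`/`iO` interpret `-` and `⁻¹`). -/
noncomputable def Fml.sat (nO iO : ∀ i, Rs i → Rs i) (I : HTI A) : W → Fml D A ι Rs → Prop
  | _, .bot => False
  | w, .atom a => a ∈ I.at w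
  | w, .impl φ ψ => ∀ w', W.le w w' → (Fml.sat nO iO I w' φ → Fml.sat nO iO I w' ψ)
  | w, .or φ ψ => Fml.sat nO iO I w φ ∨ Fml.sat nO iO I w ψ
  | w, .and φ ψ => Fml.sat nO iO I w φ ∧ Fml.sat nO iO I w ψ
  | w, .ex s b => ∃ ξ ∈ s, Fml.sat nO iO I w (b ξ)
  | w, .all s b => ∀ ξ ∈ s, Fml.sat nO iO I w (b ξ)
  | w, .constr _ cmp α => ∀ w', W.le w w' → cmp (WFml.val nO iO I w' α)

/-- Value of a weighted σ-sentence over the semiring `Rs i`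
    (`∑ᶠ` is `0` when the support is infinite, matching the junk case). -/
noncomputable def WFml.val (nO iO : ∀ i, Rs i → Rs i) (I : HTI A) :
    W → {i : ι} → WFml D A ι Rs i → Rs i
  | _, _, .const k => k
  | w, _, .form φ => if Fml.sat nO iO I w φ then 1 else 0
  | w, _, .wimpl α β =>
      if ∀ w', W.le w w' →
          (WFml.val nO iO I w' α = 0 ∨ WFml.val nO iO I w' β ≠ 0) then 1 else 0
  | w, _, .add α β => WFml.val nO iO I w α + WFml.val nO iO I w β
  | w, _, .mul α β => WFml.val nO iO I w α * WFml.val nO iO I w β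
  | w, _, .neg α => nO _ (WFml.val nO iO I w α)
  | w, _, .inv α => iO _ (WFml.val nO iO I w α)
  | w, _, .sum s b => ∑ᶠ ξ ∈ s, WFml.val nO iO I w (b ξ)
end

/- Atoms persist because `I.h ⊆ I.t`; implications and algebraic constraints are evaluated at
every world above the current one, and every world lies above `H`. -/
/-- **Persistence**: -/
theorem persistence (nO iO : ∀ i, Rs i → Rs i) (I : HTI A) (φ : Fml D A ι Rs) :
    Fml.sat nO iO I .H φ → Fml.sat nO iO I .T φ := by
  intro h
  match φ, h with
  | .bot, h => exact h.elim
  | .atom _, h => exact I.sub h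
  | .impl _ _, h => exact fun w' _ => h w' trivial
  | .constr _ _ _, h => exact fun w' _ => h w' trivial
  | .or φ ψ, h => exact h.imp (persistence nO iO I φ) (persistence nO iO I ψ)
  | .and φ ψ, h => exact ⟨persistence nO iO I φ h.1, persistence nO iO I ψ h.2⟩
  | .ex _ b, ⟨ξ, hξ, h⟩ => exact ⟨ξ, hξ, persistence nO iO I (b ξ) h⟩
  | .all _ b, h => exact fun ξ hξ => persistence nO iO I (b ξ) (h ξ hξ)
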